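/- arXiv:1101.1019 — 2 statements merged into one kernel-verified Lean document; each statement's English description precedes it below -/
import Mathlib

section
/- Symmetric Ekeland principle III. In the abstract symmetrization framework, let X be a Banach space and let f, f_h : X → ℝ ∪ {+∞} (h ∈ ℕ) be proper, bounded below, lower semicontinuous functionals such that: (Γ1) for any u in dom(f) ∩ S there is a sequence (u_h) ⊂ S with u_h → u in X and f_h(u_h) → f(u); (Γ2) liminf_h (inf_X f_h) ≥ inf_X f; and f_h(u^H) ≤ f_h(u) for all u ∈ S, H ∈ ℋ* and h ∈ ℕ. Let Y be a nonempty subset of S and let ρ > 0, σ > 0 satisfy inf_Y f < inf_X f + σρ. Then for every h₀ ≥ 1 there exist h ≥ h₀, m > 1, u_h ∈ S and v_h ∈ X such that: (a) ‖v_h − v_h*‖_V < (K(C_Θ+1)+1)ρ; (b) |f_h(v_h) − inf_X f| < σρ; (c) dist(v_h, Y) < ρ + ‖T_{(m−1)ρ/m} u_h − u_h‖; (d) f_h(w) ≥ f_h(v_h) − σ‖w − v_h‖ for all w ∈ X. In particular, if f_h = f for all h ∈ ℕ and Y ⊆ X_{ℋ*}, there exists v ∈ X with ‖v − v*‖_V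 < (K(C_Θ+1)+1)ρ, |f(v) − inf_X f| < σρ, dist(v, Y) < ρ, and f(w) ≥ f(v) − σ‖w − v‖ for all w ∈ X. -/
open Filter Topology Metric Set

/-!
Both parts apply Ekeland's variational principle at a nearly symmetric starting point.
Symmetrization is `C_Θ`-Lipschitz in `V`, being a `V`-limit of nonexpansive polarizations composed
with `Θ`, so an Ekeland point `v` within `ρ` of a starting point `u` with `‖u - u*‖_V < ρ` has
`‖v - v*‖_V < (K (C_Θ + 1) + 1) ρ`. In the first part one starts at `T_{ρ/2} u_h`, where `u_h` is a
recovery sequence (Γ1) for some `y ∈ Y` with `f y < inf f + σρ`, taken at an index where (Γ2)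
already bounds `inf f_h` from below; polarizing does not increase `f_h`. In the second part `y` is
fixed by all polarizations, hence symmetric, and one starts at `y` itself.
-/

theorem exists_iInter_eq_singleton_of_subset_closedBall {α : Type*} [MetricSpace α]
    [CompleteSpace α] {s : ℕ → Set α} {c : ℕ → α} {r : ℕ → ℝ} (hs : ∀ n, IsClosed (s n))
    (hanti : Antitone s) (hc : ∀ n, c n ∈ s n) (hr : ∀ n, s n ⊆ closedBall (c n) (r n))
    (hr0 : Tendsto r atTop (𝓝 0)) : ∃ v, ⋂ n, s n = {v} := by
  have hbdd (n : ℕ) : Bornology.IsBounded (s n) := isBounded_closedBall.subset (hr n)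
  have hdiam : Tendsto (fun n => diam (s n)) atTop (𝓝 0) := by
    refine squeeze_zero (fun n => diam_nonneg) (fun n => ?_) (by simpa using hr0.const_mul 2)
    exact (diam_mono (hr n) isBounded_closedBall).trans
      (diam_closedBall (dist_nonneg.trans (mem_closedBall.1 (hr n (hc n)))))
  obtain ⟨v, hv⟩ := nonempty_iInter_of_nonempty_biInter hs hbdd
    (fun N => ⟨c N, mem_iInter₂.2 fun n hn => hanti hn (hc N)⟩) hdiam
  refine ⟨v, eq_singleton_iff_unique_mem.2 ⟨hv, fun w hw => ?_⟩⟩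
  rw [mem_iInter] at hv hw
  exact dist_le_zero.1 (ge_of_tendsto' hdiam fun n => dist_le_diam_of_mem (hbdd n) (hw n) (hv n))

theorem exists_le_add_of_bddBelow {α : Type*} {g : α → ℝ} {s : Set α} (hs : s.Nonempty)
    (hg : BddBelow (g '' s)) {δ : ℝ} (hδ : 0 < δ) : ∃ y ∈ s, ∀ z ∈ s, g y ≤ g z + δ := by
  obtain ⟨_, ⟨y, hy, rfl⟩, hlt⟩ :=
    exists_lt_of_csInf_lt (hs.image g) (lt_add_of_pos_right (sInf (g '' s)) hδ)
  exact ⟨y, hy, fun z hz => by linarith [csInf_le hg (mem_image_of_mem g hz)]⟩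

section Ekeland

variable {E : Type*} [MetricSpace E]

def ekelandSet (g : E → ℝ) (ε : ℝ) (x : E) : Set E :=
  {y | g y + ε * dist y x ≤ g x}

theorem self_mem_ekelandSet (g : E → ℝ) (ε : ℝ) (x : E) : x ∈ ekelandSet g ε x := by
  simp [ekelandSet]

theorem ekelandSet_subset {g : E → ℝ} {ε : ℝ} (hε : 0 ≤ ε) {x y : E}
    (hy : y ∈ ekelandSet g ε x) : ekelandSet g ε y ⊆ ekelandSet g ε x := fun z hz => by
  simp only [ekelandSet, mem_ofPred_eq] at hy hz ⊢
  nlinarith [dist_triangle z y x]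

theorem LowerSemicontinuous.isClosed_ekelandSet {g : E → ℝ} (hg : LowerSemicontinuous g)
    (ε : ℝ) (x : E) : IsClosed (ekelandSet g ε x) :=
  (hg.add (continuous_const.mul (continuous_id.dist continuous_const)).lowerSemicontinuous)
    |>.isClosed_preimage (g x)

theorem ekelandSet_subset_closedBall {g : E → ℝ} {ε r : ℝ} (hε : 0 < ε) {x x' : E}
    (hx' : x' ∈ ekelandSet g ε x) (hmin : ∀ z ∈ ekelandSet g ε x, g x' ≤ g z + ε * r) :
    ekelandSet g ε x' ⊆ closedBall x' r := fun z hz => by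
  have := hmin z (ekelandSet_subset hε.le hx' hz)
  simp only [ekelandSet, mem_ofPred_eq] at hz
  exact le_of_mul_le_mul_left (by linarith) hε

theorem LowerSemicontinuous.exists_ekeland [CompleteSpace E] {g : E → ℝ}
    (hg : LowerSemicontinuous g) (hb : BddBelow (range g)) {ε : ℝ} (hε : 0 < ε) (x₀ : E) :
    ∃ v, g v + ε * dist v x₀ ≤ g x₀ ∧ ∀ w, g v ≤ g w + ε * dist w v := by
  have hnear (n : ℕ) (x : E) : ∃ y ∈ ekelandSet g ε x,
      ∀ z ∈ ekelandSet g ε x, g y ≤ g z + ε * (1 / (n + 1)) :=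
    exists_le_add_of_bddBelow ⟨x, self_mem_ekelandSet g ε x⟩
      (hb.mono (image_subset_range g _)) (by positivity)
  choose next hnext_mem hnext_le using hnear
  -- each `x (n + 1)` nearly minimizes `g` on the previous Ekeland set, so these sets shrink to a
  -- point `v`; the Ekeland set of `v` lies in all of them, hence is `{v}`
  let x : ℕ → E := fun n => Nat.rec x₀ next n
  have hanti : Antitone fun n => ekelandSet g ε (x n) :=
    antitone_nat_of_succ_le fun n => ekelandSet_subset hε.le (hnext_mem n (x n))
  obtain ⟨v, hv⟩ := exists_iInter_eq_singleton_of_subset_closedBall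
    (fun n => hg.isClosed_ekelandSet ε (x (n + 1))) (fun n m hnm => hanti (Nat.succ_le_succ hnm))
    (fun n => self_mem_ekelandSet g ε (x (n + 1)))
    (fun n => ekelandSet_subset_closedBall hε (hnext_mem n (x n)) (hnext_le n (x n)))
    tendsto_one_div_add_atTop_nhds_zero_nat
  have hvF (n : ℕ) : v ∈ ekelandSet g ε (x (n + 1)) := mem_iInter.1 (hv ▸ mem_singleton v) n
  refine ⟨v, hanti (Nat.zero_le 1) (hvF 0), fun w => le_of_not_gt fun hw => ?_⟩
  have hwv : w ∈ ⋂ n, ekelandSet g ε (x (n + 1)) :=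
    mem_iInter.2 fun n => ekelandSet_subset hε.le (hvF n) hw.le
  rw [hv, mem_singleton_iff] at hwv
  subst hwv
  simp at hw

end Ekeland

theorem EReal.coe_toReal_min {x : EReal} (hx : x ≠ ⊥) (M : ℝ) :
    ((min x M).toReal : EReal) = min x M :=
  EReal.coe_toReal (ne_top_of_le_ne_top (EReal.coe_ne_top M) (min_le_right _ _)) (by simp [hx])

theorem LowerSemicontinuous.toReal_min {α : Type*} [TopologicalSpace α] {f : α → EReal}
    (hf : LowerSemicontinuous f) (hbot : ∀ x, f x ≠ ⊥) (M : ℝ) :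
    LowerSemicontinuous fun x => (min (f x) M).toReal := by
  intro x y hy
  have hy' : (y : EReal) < min (f x) M := by
    rw [← EReal.coe_toReal_min (hbot x)]; exact_mod_cast hy
  filter_upwards [hf x y (hy'.trans_le (min_le_left _ _))] with z hz
  show y < _
  rw [← EReal.coe_lt_coe_iff, EReal.coe_toReal_min (hbot z)]
  exact lt_min hz (hy'.trans_le (min_le_right _ _))

theorem LowerSemicontinuous.exists_ekeland_ereal {E : Type*} [MetricSpace E] [CompleteSpace E]
    {f : E → EReal} (hf : LowerSemicontinuous f) {c : ℝ} (hc : ∀ x, (c : EReal) ≤ f x)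
    {ε δ : ℝ} (hε : 0 < ε) {x₀ : E} (hx₀ : f x₀ < (⨅ x, f x) + ((ε * δ : ℝ) : EReal)) :
    ∃ v, f v ≤ f x₀ ∧ dist v x₀ < δ ∧ ∀ w, f v - ((ε * dist w v : ℝ) : EReal) ≤ f w := by
  have hbot (x : E) : f x ≠ ⊥ := ((EReal.bot_lt_coe c).trans_le (hc x)).ne'
  lift f x₀ to ℝ using ⟨(hx₀.trans_le le_top).ne, hbot x₀⟩ with a ha
  -- truncating at `a + 1` makes `g` real-valued; it agrees with `f` at the Ekeland point `v`,
  -- where `g v ≤ g x₀ = a`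
  set g : E → ℝ := fun x => (min (f x) ((a + 1 : ℝ) : EReal)).toReal
  have hg (x : E) : (g x : EReal) = min (f x) ((a + 1 : ℝ) : EReal) :=
    EReal.coe_toReal_min (hbot x) _
  have hgb : BddBelow (range g) := ⟨min c (a + 1), forall_mem_range.2 fun x => by
    rw [← EReal.coe_le_coe_iff, hg]
    exact le_min ((EReal.coe_le_coe_iff.2 (min_le_left _ _)).trans (hc x))
      (EReal.coe_le_coe_iff.2 (min_le_right _ _))⟩
  have hgx₀ : g x₀ = a := by
    have := hg x₀
    rw [← ha, min_eq_left (EReal.coe_le_coe_iff.2 (lt_add_one a).le)] at this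
    exact_mod_cast this
  obtain ⟨v, hv, hslope⟩ := (hf.toReal_min hbot (a + 1)).exists_ekeland hgb hε x₀
  have hεd : 0 ≤ ε * dist v x₀ := mul_nonneg hε.le dist_nonneg
  have hgv : (g v : EReal) = f v := by
    have hlt : (g v : EReal) < ((a + 1 : ℝ) : EReal) := by exact_mod_cast (by linarith)
    rw [hg] at hlt ⊢
    exact min_eq_left ((min_lt_iff.1 hlt).resolve_right (lt_irrefl _)).le
  refine ⟨v, ?_, ?_, fun w => ?_⟩
  · rw [← hgv]; exact_mod_cast (by linarith)
  · have hav : a < g v + ε * δ := by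
      have : (a : EReal) < ((g v + ε * δ : ℝ) : EReal) := by
        rw [EReal.coe_add, hgv]
        exact hx₀.trans_le (add_le_add_left (iInf_le f v) _)
      exact_mod_cast this
    exact lt_of_mul_lt_mul_left (by linarith) hε.le
  · calc f v - ((ε * dist w v : ℝ) : EReal) = ((g v - ε * dist w v : ℝ) : EReal) := by
          rw [EReal.coe_sub, hgv]
      _ ≤ g w := by exact_mod_cast (by linarith [hslope w])
      _ ≤ f w := by rw [hg]; exact min_le_left _ _

section Polarization

variable {X P : Type*} {S : Set X} {pol : X → P → X}

theorem foldl_pol_le {β : Type*} [Preorder β] {φ : X → β} (hS : ∀ u ∈ S, ∀ H, pol u H ∈ S)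
    (hφ : ∀ u ∈ S, ∀ H, φ (pol u H) ≤ φ u) (l : List P) {u : X} (hu : u ∈ S) :
    φ (l.foldl pol u) ≤ φ u := by
  induction l generalizing u with
  | nil => exact le_rfl
  | cons H l ih => exact (ih (hS u hu H)).trans (hφ u hu H)

variable {V : Type*}

theorem map_sy_eq_of_forall_pol_eq [TopologicalSpace V] [T2Space V] {ι : X → V} {sy : X → X}
    (happrox : ∃ Hs : ℕ → P, ∀ u ∈ S,
      Tendsto (fun m => ι (List.foldl pol u ((List.range m).map Hs))) atTop (𝓝 (ι (sy u))))
    {u : X} (hu : u ∈ S) (hfix : ∀ H, pol u H = u) : ι (sy u) = ι u := by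
  obtain ⟨Hs, hHs⟩ := happrox
  refine tendsto_nhds_unique (hHs u hu) ?_
  simp only [List.foldl_fixed' hfix]
  exact tendsto_const_nhds

variable [SeminormedAddCommGroup V] {ι : X → V}

theorem norm_foldl_pol_sub_le (hS : ∀ u ∈ S, ∀ H, pol u H ∈ S)
    (hcontr : ∀ u ∈ S, ∀ v ∈ S, ∀ H, ‖ι (pol u H) - ι (pol v H)‖ ≤ ‖ι u - ι v‖) (l : List P)
    {u v : X} (hu : u ∈ S) (hv : v ∈ S) :
    ‖ι (l.foldl pol u) - ι (l.foldl pol v)‖ ≤ ‖ι u - ι v‖ := by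
  induction l generalizing u v with
  | nil => exact le_rfl
  | cons H l ih => exact (ih (hS u hu H) (hS v hv H)).trans (hcontr u hu v hv H)

theorem norm_sy_sub_le {sy : X → X} (hS : ∀ u ∈ S, ∀ H, pol u H ∈ S)
    (hcontr : ∀ u ∈ S, ∀ v ∈ S, ∀ H, ‖ι (pol u H) - ι (pol v H)‖ ≤ ‖ι u - ι v‖)
    (happrox : ∃ Hs : ℕ → P, ∀ u ∈ S,
      Tendsto (fun m => ι (List.foldl pol u ((List.range m).map Hs))) atTop (𝓝 (ι (sy u))))
    {u v : X} (hu : u ∈ S) (hv : v ∈ S) : ‖ι (sy u) - ι (sy v)‖ ≤ ‖ι u - ι v‖ := by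
  obtain ⟨Hs, hHs⟩ := happrox
  exact le_of_tendsto' ((hHs u hu).sub (hHs v hv)).norm fun m =>
    norm_foldl_pol_sub_le hS hcontr _ hu hv

theorem norm_sy_sub_le_mul {sy Θ : X → X} {CΘ : ℝ} (hS : ∀ u ∈ S, ∀ H, pol u H ∈ S)
    (hcontr : ∀ u ∈ S, ∀ v ∈ S, ∀ H, ‖ι (pol u H) - ι (pol v H)‖ ≤ ‖ι u - ι v‖)
    (happrox : ∃ Hs : ℕ → P, ∀ u ∈ S,
      Tendsto (fun m => ι (List.foldl pol u ((List.range m).map Hs))) atTop (𝓝 (ι (sy u))))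
    (hΘS : ∀ u, Θ u ∈ S) (hΘlip : ∀ u v, ‖ι (Θ u) - ι (Θ v)‖ ≤ CΘ * ‖ι u - ι v‖)
    (hsyΘ : ∀ u, sy u = sy (Θ u)) (u v : X) : ‖ι (sy u) - ι (sy v)‖ ≤ CΘ * ‖ι u - ι v‖ := by
  rw [hsyΘ u, hsyΘ v]
  exact (norm_sy_sub_le hS hcontr happrox (hΘS u) (hΘS v)).trans (hΘlip u v)

end Polarization

section SymmetricEkeland

variable {X V : Type*} [NormedAddCommGroup X] [SeminormedAddCommGroup V] {ι : X → V}
  {sy : X → X} {K CΘ : ℝ}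

theorem norm_sub_sy_lt (hK : 0 ≤ K) (hι : ∀ u v, ‖ι u - ι v‖ ≤ K * ‖u - v‖) (hCΘ : 0 ≤ CΘ)
    (hsy : ∀ u v, ‖ι (sy u) - ι (sy v)‖ ≤ CΘ * ‖ι u - ι v‖) {u v : X} {r : ℝ}
    (hvu : ‖v - u‖ ≤ r) (hu : ‖ι u - ι (sy u)‖ < r) :
    ‖ι v - ι (sy v)‖ < (K * (CΘ + 1) + 1) * r := by
  have hιvu : ‖ι v - ι u‖ ≤ K * r := (hι v u).trans (mul_le_mul_of_nonneg_left hvu hK)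
  have hsyuv : ‖ι (sy u) - ι (sy v)‖ ≤ CΘ * (K * r) :=
    (hsy u v).trans (mul_le_mul_of_nonneg_left (norm_sub_rev (ι u) (ι v) ▸ hιvu) hCΘ)
  calc ‖ι v - ι (sy v)‖ ≤ ‖ι v - ι u‖ + (‖ι u - ι (sy u)‖ + ‖ι (sy u) - ι (sy v)‖) :=
        (norm_sub_le_norm_sub_add_norm_sub _ (ι u) _).trans
          (by gcongr; exact norm_sub_le_norm_sub_add_norm_sub _ _ _)
    _ < K * r + (r + CΘ * (K * r)) := add_lt_add_of_le_of_lt hιvu (add_lt_add_of_lt_of_le hu hsyuv)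
    _ = (K * (CΘ + 1) + 1) * r := by ring

variable [CompleteSpace X]

theorem exists_ekeland_point_of_norm_sub_sy_lt (hK : 0 ≤ K)
    (hι : ∀ u v, ‖ι u - ι v‖ ≤ K * ‖u - v‖) (hCΘ : 0 ≤ CΘ)
    (hsy : ∀ u v, ‖ι (sy u) - ι (sy v)‖ ≤ CΘ * ‖ι u - ι v‖) {φ : X → EReal}
    (hφ : LowerSemicontinuous φ) {c : ℝ} (hc : ∀ x, (c : EReal) ≤ φ x) {σ δ ρ : ℝ}
    (hσ : 0 < σ) (hδρ : δ ≤ ρ) {u : X} (hu : φ u < (⨅ x, φ x) + ((σ * δ : ℝ) : EReal))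
    (husy : ‖ι u - ι (sy u)‖ < ρ) :
    ∃ v, φ v ≤ φ u ∧ ‖v - u‖ < δ ∧ ‖ι v - ι (sy v)‖ < (K * (CΘ + 1) + 1) * ρ ∧
      ∀ w, φ v - ((σ * ‖w - v‖ : ℝ) : EReal) ≤ φ w := by
  obtain ⟨v, hvu, hdist, hslope⟩ := hφ.exists_ekeland_ereal hc hσ hu
  rw [dist_eq_norm] at hdist
  exact ⟨v, hvu, hdist, norm_sub_sy_lt hK hι hCΘ hsy (hdist.le.trans hδρ) husy,
    fun w => by simpa only [dist_eq_norm] using hslope w⟩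

theorem exists_ekeland_point_of_recovery (hK : 0 ≤ K)
    (hι : ∀ u v, ‖ι u - ι v‖ ≤ K * ‖u - v‖) (hCΘ : 0 ≤ CΘ)
    (hsy : ∀ u v, ‖ι (sy u) - ι (sy v)‖ ≤ CΘ * ‖ι u - ι v‖) {φ : X → EReal}
    (hφ : LowerSemicontinuous φ) {c : ℝ} (hc : ∀ x, (c : EReal) ≤ φ x) {σ ρ t ℓ a : ℝ}
    (hσ : 0 < σ) (ht : 0 < t) (hgap : a + 3 * (σ * t) ≤ ℓ + σ * ρ) {Y : Set X} {y u u' : X}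
    (hyY : y ∈ Y) (huy : dist u y < t) (hφu : φ u < ((a + σ * t : ℝ) : EReal))
    (hφinf : ((ℓ - σ * t : ℝ) : EReal) < ⨅ x, φ x) (hu'u : φ u' ≤ φ u)
    (hu' : ‖ι u' - ι (sy u')‖ < ρ) :
    ∃ v, ‖ι v - ι (sy v)‖ < (K * (CΘ + 1) + 1) * ρ ∧
      ((ℓ : EReal) - ((σ * ρ : ℝ) : EReal) < φ v ∧ φ v < (ℓ : EReal) + ((σ * ρ : ℝ) : EReal)) ∧
      infDist v Y < ρ + ‖u' - u‖ ∧ ∀ w, φ v - ((σ * ‖w - v‖ : ℝ) : EReal) ≤ φ w := by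
  have hσt : 0 < σ * t := mul_pos hσ ht
  have hℓa : ℓ - σ * t < a + σ * t := by
    exact_mod_cast hφinf.trans_le ((iInf_le φ u).trans hφu.le)
  have hstart : φ u' < (⨅ x, φ x) + ((σ * (ρ - t) : ℝ) : EReal) :=
    calc φ u' ≤ φ u := hu'u
      _ < ((a + σ * t : ℝ) : EReal) := hφu
      _ ≤ ((ℓ - σ * t + σ * (ρ - t) : ℝ) : EReal) := by exact_mod_cast (by linarith)
      _ ≤ (⨅ x, φ x) + ((σ * (ρ - t) : ℝ) : EReal) := by
        rw [EReal.coe_add]; gcongr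
  obtain ⟨v, hvu', hdist, hsym, hslope⟩ :=
    exists_ekeland_point_of_norm_sub_sy_lt hK hι hCΘ hsy hφ hc hσ (by linarith) hstart hu'
  refine ⟨v, hsym, ⟨?_, ?_⟩, ?_, hslope⟩
  · calc (ℓ : EReal) - ((σ * ρ : ℝ) : EReal) = ((ℓ - σ * ρ : ℝ) : EReal) := (EReal.coe_sub _ _).symm
      _ < ((ℓ - σ * t : ℝ) : EReal) := by exact_mod_cast (by linarith)
      _ < ⨅ x, φ x := hφinf
      _ ≤ φ v := iInf_le φ v
  · calc φ v ≤ φ u := hvu'.trans hu'u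
      _ < ((a + σ * t : ℝ) : EReal) := hφu
      _ ≤ ((ℓ + σ * ρ : ℝ) : EReal) := by exact_mod_cast (by linarith)
  · calc infDist v Y ≤ dist v y := infDist_le_dist_of_mem hyY
      _ ≤ dist v u' + dist u' u + dist u y := dist_triangle4 v u' u y
      _ < ρ + ‖u' - u‖ := by rw [dist_eq_norm v u', dist_eq_norm u' u]; linarith

end SymmetricEkeland

theorem exists_index_of_recovery {X : Type*} [PseudoMetricSpace X] {fs : ℕ → X → EReal}
    {us : ℕ → X} {y : X} {a ℓ η t : ℝ} (hus : Tendsto us atTop (𝓝 y))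
    (hfus : Tendsto (fun h => fs h (us h)) atTop (𝓝 (a : EReal)))
    (hinf : (ℓ : EReal) ≤ liminf (fun h => ⨅ x, fs h x) atTop) (hη : 0 < η) (ht : 0 < t)
    (h₀ : ℕ) : ∃ h ≥ h₀, dist (us h) y < t ∧ fs h (us h) < ((a + η : ℝ) : EReal) ∧
      ((ℓ - η : ℝ) : EReal) < ⨅ x, fs h x := by
  have hval := hfus.eventually_lt_const (EReal.coe_lt_coe_iff.2 (lt_add_of_pos_right a hη))
  have hinf' := eventually_lt_of_lt_liminf ((EReal.coe_lt_coe_iff.2 (sub_lt_self ℓ hη)).trans_le hinf)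
  obtain ⟨h, hh₀, hd, hv, hi⟩ :=
    ((eventually_ge_atTop h₀).and ((hus.eventually_mem (ball_mem_nhds y ht)).and (hval.and hinf'))).exists
  exact ⟨h, hh₀, hd, hv, hi⟩

theorem exists_mem_eq_coe_of_iInf_lt {α : Type*} {f : α → EReal} {c : ℝ}
    (hc : ∀ x, (c : EReal) ≤ f x) {Y : Set α} {r : ℝ}
    (hY : ⨅ y : Y, f y < (⨅ x, f x) + (r : EReal)) :
    ∃ y ∈ Y, f y < (⨅ x, f x) + (r : EReal) ∧
      ∃ ℓ a : ℝ, ⨅ x, f x = ℓ ∧ f y = a ∧ a < ℓ + r := by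
  obtain ⟨⟨y, hyY⟩, hy⟩ := iInf_lt_iff.1 hY
  obtain ⟨a, ha⟩ : ∃ a : ℝ, f y = a :=
    ⟨_, (EReal.coe_toReal (hy.trans_le le_top).ne ((EReal.bot_lt_coe c).trans_le (hc y)).ne').symm⟩
  obtain ⟨ℓ, hℓ⟩ : ∃ ℓ : ℝ, ⨅ x, f x = ℓ :=
    ⟨_, (EReal.coe_toReal ((iInf_le f y).trans_lt (ha ▸ EReal.coe_lt_top a)).ne
      ((EReal.bot_lt_coe c).trans_le (le_iInf hc)).ne').symm⟩
  refine ⟨y, hyY, hy, ℓ, a, hℓ, ha, ?_⟩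
  rw [ha, hℓ] at hy
  exact_mod_cast hy

theorem symmetric_ekeland_III_general
    {X : Type*} [NormedAddCommGroup X] [NormedSpace ℝ X] [CompleteSpace X]
    {V : Type*} [NormedAddCommGroup V] [NormedSpace ℝ V]
    (ι : X →L[ℝ] V)
    (K : ℝ) (hK : 0 < K) (hιK : ∀ u : X, ‖ι u‖ ≤ K * ‖u‖)
    (S : Set X)
    {P : Type*}
    (pol : X → P → X) (sy : X → X)
    (hpolS : ∀ u ∈ S, ∀ H : P, pol u H ∈ S)
    (happrox : ∃ Hs : ℕ → P, ∀ u ∈ S,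
      Filter.Tendsto (fun m => ι (List.foldl pol u ((List.range m).map Hs)))
        Filter.atTop (nhds (ι (sy u))))
    (hpolContr : ∀ u ∈ S, ∀ v ∈ S, ∀ H : P, ‖ι (pol u H) - ι (pol v H)‖ ≤ ‖ι u - ι v‖)
    (Θ : X → X) (CΘ : ℝ) (hCΘ : 0 < CΘ)
    (hΘS : ∀ u : X, Θ u ∈ S)
    (hΘlip : ∀ u v : X, ‖ι (Θ u) - ι (Θ v)‖ ≤ CΘ * ‖ι u - ι v‖)
    (hsyext : ∀ u : X, sy u = sy (Θ u))
    (T : ℝ → X → X)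
    (hTpol : ∀ ρ > (0:ℝ), ∀ u ∈ S, ∃ l : List P, T ρ u = List.foldl pol u l)
    (hTsy : ∀ ρ > (0:ℝ), ∀ u ∈ S, sy (T ρ u) = sy u)
    (hTapprox : ∀ ρ > (0:ℝ), ∀ u ∈ S, ‖ι (T ρ u) - ι (sy u)‖ < ρ)
    (f : X → EReal) (fs : ℕ → X → EReal)
    (hfbdd : ∃ c : ℝ, ∀ u, (c : EReal) ≤ f u)
    (hflsc : LowerSemicontinuous f)
    (hfsbdd : ∀ h : ℕ, ∃ c : ℝ, ∀ u, (c : EReal) ≤ fs h u)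
    (hfslsc : ∀ h : ℕ, LowerSemicontinuous (fs h))
    (hGamma1 : ∀ u ∈ S, f u ≠ ⊤ → ∃ us : ℕ → X, (∀ h, us h ∈ S) ∧
      Filter.Tendsto us Filter.atTop (nhds u) ∧
      Filter.Tendsto (fun h => fs h (us h)) Filter.atTop (nhds (f u)))
    (hGamma2 : (⨅ w, f w) ≤ Filter.liminf (fun h => ⨅ w, fs h w) Filter.atTop)
    (hfspol : ∀ h : ℕ, ∀ u ∈ S, ∀ H : P, fs h (pol u H) ≤ fs h u)
    (Y : Set X) (hYS : Y ⊆ S)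
    (ρ σ : ℝ) (hρ : 0 < ρ) (hσ : 0 < σ)
    (hYinf : (⨅ y : Y, f y) < (⨅ w, f w) + ((σ * ρ : ℝ) : EReal)) :
    (∀ h₀ : ℕ, 1 ≤ h₀ → ∃ h ≥ h₀, ∃ m : ℝ, 1 < m ∧ ∃ uh ∈ S, ∃ vh : X,
      ‖ι vh - ι (sy vh)‖ < (K * (CΘ + 1) + 1) * ρ ∧
      ((⨅ w, f w) - ((σ * ρ : ℝ) : EReal) < fs h vh ∧
        fs h vh < (⨅ w, f w) + ((σ * ρ : ℝ) : EReal)) ∧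
      Metric.infDist vh Y < ρ + ‖T ((m - 1) * ρ / m) uh - uh‖ ∧
      (∀ w : X, fs h vh - ((σ * ‖w - vh‖ : ℝ) : EReal) ≤ fs h w)) ∧
    ((∀ h : ℕ, fs h = f) → (∀ y ∈ Y, ∀ H : P, pol y H = y) →
      ∃ v : X,
        ‖ι v - ι (sy v)‖ < (K * (CΘ + 1) + 1) * ρ ∧
        ((⨅ w, f w) - ((σ * ρ : ℝ) : EReal) < f v ∧
          f v < (⨅ w, f w) + ((σ * ρ : ℝ) : EReal)) ∧
        Metric.infDist v Y < ρ ∧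
        (∀ w : X, f v - ((σ * ‖w - v‖ : ℝ) : EReal) ≤ f w)) := by
  obtain ⟨c, hc⟩ := hfbdd
  obtain ⟨y, hyY, hy, ℓ, a, hℓ, hya, hgap⟩ := exists_mem_eq_coe_of_iInf_lt hc hYinf
  have hι (u v : X) : ‖ι u - ι v‖ ≤ K * ‖u - v‖ := by rw [← map_sub]; exact hιK _
  have hsy := norm_sy_sub_le_mul hpolS hpolContr happrox hΘS hΘlip hsyext
  refine ⟨fun h₀ _ => ?_, fun _ hfix => ?_⟩
  · obtain ⟨us, husS, hus, hfus⟩ := hGamma1 y (hYS hyY) (hya ▸ EReal.coe_ne_top a)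
    obtain ⟨t, ht, hσt⟩ := exists_pos_mul_lt (sub_pos.2 hgap) (3 * σ)
    obtain ⟨h, hh₀, huy, hfu, hinf⟩ :=
      exists_index_of_recovery hus (hya ▸ hfus) (hℓ ▸ hGamma2) (mul_pos hσ ht) ht h₀
    obtain ⟨cₕ, hcₕ⟩ := hfsbdd h
    have hr : (0 : ℝ) < (2 - 1) * ρ / 2 := by positivity
    obtain ⟨l, hl⟩ := hTpol _ hr (us h) (husS h)
    refine ⟨h, hh₀, 2, one_lt_two, us h, husS h, ?_⟩
    rw [hℓ]
    refine exists_ekeland_point_of_recovery hK.le hι hCΘ.le hsy (hfslsc h) hcₕ hσ ht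
      (by linarith) hyY huy hfu hinf (hl ▸ foldl_pol_le hpolS (hfspol h) l (husS h)) ?_
    rw [hTsy _ hr _ (husS h)]
    exact (hTapprox _ hr _ (husS h)).trans (by linarith)
  · have hysy : ‖ι y - ι (sy y)‖ < ρ := by
      rwa [map_sy_eq_of_forall_pol_eq happrox (hYS hyY) (hfix y hyY), sub_self, norm_zero]
    obtain ⟨v, hvy, hdist, hsym, hslope⟩ :=
      exists_ekeland_point_of_norm_sub_sy_lt hK.le hι hCΘ.le hsy hflsc hc hσ le_rfl hy hysy
    refine ⟨v, hsym, ⟨?_, hvy.trans_lt hy⟩, ?_, hslope⟩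
    · rw [hℓ, ← EReal.coe_sub]
      exact (EReal.coe_lt_coe_iff.2 (sub_lt_self ℓ (mul_pos hσ hρ))).trans_le
        (hℓ ▸ iInf_le f v)
    · exact (infDist_le_dist_of_mem hyY).trans_lt (by rwa [dist_eq_norm])

theorem symmetric_ekeland_III
    {X : Type*} [NormedAddCommGroup X] [NormedSpace ℝ X] [CompleteSpace X]
    {V : Type*} [NormedAddCommGroup V] [NormedSpace ℝ V] [CompleteSpace V]
    {W : Type*} [NormedAddCommGroup W] [NormedSpace ℝ W] [CompleteSpace W]
    (ι : X →L[ℝ] V) (κ : V →L[ℝ] W)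
    (K : ℝ) (hK : 0 < K) (hιK : ∀ u : X, ‖ι u‖ ≤ K * ‖u‖)
    (S : Set X)
    {P : Type*} [TopologicalSpace P] [PathConnectedSpace P]
    (pol : X → P → X) (sy : X → X)
    (hpolS : ∀ u ∈ S, ∀ H : P, pol u H ∈ S)
    (hsyS : ∀ u : X, sy u ∈ S)
    (hpolCont : ContinuousOn (fun q : X × P => pol q.1 q.2) (S ×ˢ Set.univ))
    (hsypol : ∀ u ∈ S, ∀ H : P,
      pol (sy u) H = sy u ∧ sy (pol u H) = sy u ∧ pol (pol u H) H = pol u H)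
    (happrox : ∃ Hs : ℕ → P, ∀ u ∈ S,
      Filter.Tendsto (fun m => ι (List.foldl pol u ((List.range m).map Hs)))
        Filter.atTop (nhds (ι (sy u))))
    (hpolContr : ∀ u ∈ S, ∀ v ∈ S, ∀ H : P, ‖ι (pol u H) - ι (pol v H)‖ ≤ ‖ι u - ι v‖)
    (Θ : X → X) (CΘ : ℝ) (hCΘ : 0 < CΘ)
    (hΘS : ∀ u : X, Θ u ∈ S) (hΘid : ∀ u ∈ S, Θ u = u)
    (hΘlip : ∀ u v : X, ‖ι (Θ u) - ι (Θ v)‖ ≤ CΘ * ‖ι u - ι v‖)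
    (hpolext : ∀ u : X, ∀ H : P, pol u H = pol (Θ u) H)
    (hsyext : ∀ u : X, sy u = sy (Θ u))
    (T : ℝ → X → X)
    (hTS : ∀ ρ > (0:ℝ), ∀ u ∈ S, T ρ u ∈ S)
    (hTpol : ∀ ρ > (0:ℝ), ∀ u ∈ S, ∃ l : List P, T ρ u = List.foldl pol u l)
    (hTsy : ∀ ρ > (0:ℝ), ∀ u ∈ S, sy (T ρ u) = sy u)
    (hTapprox : ∀ ρ > (0:ℝ), ∀ u ∈ S, ‖ι (T ρ u) - ι (sy u)‖ < ρ)
    (f : X → EReal) (fs : ℕ → X → EReal)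
    (hfproper : ∃ u, f u ≠ ⊤)
    (hfbdd : ∃ c : ℝ, ∀ u, (c : EReal) ≤ f u)
    (hflsc : LowerSemicontinuous f)
    (hfsproper : ∀ h : ℕ, ∃ u, fs h u ≠ ⊤)
    (hfsbdd : ∀ h : ℕ, ∃ c : ℝ, ∀ u, (c : EReal) ≤ fs h u)
    (hfslsc : ∀ h : ℕ, LowerSemicontinuous (fs h))
    (hGamma1 : ∀ u ∈ S, f u ≠ ⊤ → ∃ us : ℕ → X, (∀ h, us h ∈ S) ∧
      Filter.Tendsto us Filter.atTop (nhds u) ∧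
      Filter.Tendsto (fun h => fs h (us h)) Filter.atTop (nhds (f u)))
    (hGamma2 : (⨅ w, f w) ≤ Filter.liminf (fun h => ⨅ w, fs h w) Filter.atTop)
    (hfspol : ∀ h : ℕ, ∀ u ∈ S, ∀ H : P, fs h (pol u H) ≤ fs h u)
    (Y : Set X) (hYne : Y.Nonempty) (hYS : Y ⊆ S)
    (ρ σ : ℝ) (hρ : 0 < ρ) (hσ : 0 < σ)
    (hYinf : (⨅ y : Y, f y) < (⨅ w, f w) + ((σ * ρ : ℝ) : EReal)) :
    (∀ h₀ : ℕ, 1 ≤ h₀ → ∃ h ≥ h₀, ∃ m : ℝ, 1 < m ∧ ∃ uh ∈ S, ∃ vh : X,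
      ‖ι vh - ι (sy vh)‖ < (K * (CΘ + 1) + 1) * ρ ∧
      ((⨅ w, f w) - ((σ * ρ : ℝ) : EReal) < fs h vh ∧
        fs h vh < (⨅ w, f w) + ((σ * ρ : ℝ) : EReal)) ∧
      Metric.infDist vh Y < ρ + ‖T ((m - 1) * ρ / m) uh - uh‖ ∧
      (∀ w : X, fs h vh - ((σ * ‖w - vh‖ : ℝ) : EReal) ≤ fs h w)) ∧
    ((∀ h : ℕ, fs h = f) → (∀ y ∈ Y, ∀ H : P, pol y H = y) →
      ∃ v : X,
        ‖ι v - ι (sy v)‖ < (K * (CΘ + 1) + 1) * ρ ∧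
        ((⨅ w, f w) - ((σ * ρ : ℝ) : EReal) < f v ∧
          f v < (⨅ w, f w) + ((σ * ρ : ℝ) : EReal)) ∧
        Metric.infDist v Y < ρ ∧
        (∀ w : X, f v - ((σ * ‖w - v‖ : ℝ) : EReal) ≤ f w)) :=
  symmetric_ekeland_III_general ι K hK hιK S pol sy hpolS happrox hpolContr Θ CΘ hCΘ hΘS hΘlip
    hsyext T hTpol hTsy hTapprox f fs hfbdd hflsc hfsbdd hfslsc hGamma1 hGamma2 hfspol Y hYS ρ σ hρ
    hσ hYinf
end

section
/- Weak-slope consequence of the symmetric Zhong principle. In the abstract symmetrization framework, let X be a Banach space and let η : [0,+∞) → [0,+∞) be nondecreasing and continuous with ∫₀^{+∞} ds/(1+η(s)) = +∞. Assume that for some ρ₀ > 0 there is a function r : [0,ρ₀) → [0,+∞) with ∫₀^{r(ρ)} ds/(1+η(s)) ≥ ρ for all ρ ∈ (0,ρ₀) and r(ρ) → 0 as ρ → 0⁺. Let f : X → ℝ ∪ {+∞} be a proper, bounded below, lower semicontinuous functional such that f(u^H) ≤ f(u) for all u ∈ S and all H ∈ ℋ*. Then for every ρ ∈ (0,ρ₀)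 and every u_ρ ∈ S with f(u_ρ) < inf_X f + ρ², there exists v_ρ ∈ X such that: (a) ‖v_ρ − v_ρ*‖_V < (K(C_Θ+1)+1)r(ρ); (b) (1 + η(‖v_ρ − T_{r(ρ)} u_ρ‖))·|df|(v_ρ) ≤ ρ. Moreover, for every minimizing sequence (u_j) ⊂ X_{ℋ*} for f, there exists a minimizing sequence (v_j) ⊂ X such that ‖v_j − v_j*‖_V → 0 and (1 + η(‖v_j − u_j‖))·|df|(v_j) → 0 as j → ∞. -/
/-!
Zhong's principle comes from an Ekeland iteration whose step weight `ρ / (1 + η (d(z, w)))`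
decreases with the distance to the starting point `w`. Along the iteration the potential
`ρ ∫₀^{d(z, w)} ds / (1 + η s)` grows by at most the weighted step length, hence by at most the
decrease of `f`; since `f w < inf f + ρ²` the iteration stays in the ball of radius `r(ρ)`. The limit
point satisfies an Ekeland inequality with constant `ρ / (1 + η ‖v - w‖)`, which bounds its weak slope.

Started at the polarized point `w = T_{r(ρ)} u`, which is within `r(ρ)` of `u*`, the Zhong point stays
within `(K (CΘ + 1) + 1) r(ρ)` of its own symmetrization, because symmetrization is nonexpansive on
`S` (a limit of nonexpansive iterated polarizations) and `Θ` is Lipschitz. For a minimizing sequence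
of polarization-invariant `u_j`, which `T` fixes, one takes `ρ_j → 0` with `f u_j < inf f + ρ_j²`.
-/

open Filter Topology Metric Set

noncomputable def weakSlope {X : Type*} [NormedAddCommGroup X] [NormedSpace ℝ X]
    (f : X → EReal) (u : X) : EReal :=
  sSup {σ : EReal | ∃ s : ℝ, 0 ≤ s ∧ σ = (s : EReal) ∧ ∃ δ : ℝ, 0 < δ ∧
    ∃ D : (X × ℝ) × ℝ → X,
      ContinuousOn D ((Metric.ball ((u, (f u).toReal)) δ ∩
          {p : X × ℝ | f p.1 ≤ (p.2 : EReal)}) ×ˢ Set.Icc 0 δ) ∧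
      ∀ p ∈ Metric.ball ((u, (f u).toReal)) δ ∩ {p : X × ℝ | f p.1 ≤ (p.2 : EReal)},
        ∀ t ∈ Set.Icc (0:ℝ) δ,
          ‖D (p, t) - p.1‖ ≤ t ∧ f (D (p, t)) ≤ f p.1 - ((s * t : ℝ) : EReal)}

section Integral

variable {η : ℝ → ℝ}

theorem continuousOn_one_div_one_add (hη_nonneg : ∀ s, 0 ≤ s → 0 ≤ η s)
    (hη_cont : ContinuousOn η (Ici 0)) :
    ContinuousOn (fun s => 1 / (1 + η s)) (Ici 0) :=
  continuousOn_const.div (continuousOn_const.add hη_cont) fun s hs => by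
    linarith [hη_nonneg s hs]

theorem integral_one_div_one_add_mono (hη_nonneg : ∀ s, 0 ≤ s → 0 ≤ η s)
    (hη_cont : ContinuousOn η (Ici 0)) {a b : ℝ} (ha : 0 ≤ a) (hab : a ≤ b) :
    ∫ s in (0:ℝ)..a, 1 / (1 + η s) ≤ ∫ s in (0:ℝ)..b, 1 / (1 + η s) := by
  refine intervalIntegral.integral_mono_interval le_rfl ha hab ?_
    ((continuousOn_one_div_one_add hη_nonneg hη_cont).mono ?_).intervalIntegrable
  · filter_upwards [MeasureTheory.ae_restrict_mem measurableSet_Ioc] with s hs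
    have := hη_nonneg s hs.1.le
    positivity
  · rw [uIcc_of_le (ha.trans hab)]
    exact Icc_subset_Ici_self

theorem integral_one_div_one_add_add_le (hη_nonneg : ∀ s, 0 ≤ s → 0 ≤ η s)
    (hη_mono : MonotoneOn η (Ici 0)) (hη_cont : ContinuousOn η (Ici 0)) {a d : ℝ}
    (ha : 0 ≤ a) (hd : 0 ≤ d) :
    ∫ s in (0:ℝ)..(a + d), 1 / (1 + η s) ≤
      (∫ s in (0:ℝ)..a, 1 / (1 + η s)) + d / (1 + η a) := by
  have hint : ∀ b c : ℝ, 0 ≤ b → b ≤ c →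
      IntervalIntegrable (fun s => 1 / (1 + η s)) MeasureTheory.volume b c := fun b c hb hbc =>
    ((continuousOn_one_div_one_add hη_nonneg hη_cont).mono
      (by rw [uIcc_of_le hbc]; exact fun s hs => hb.trans hs.1)).intervalIntegrable
  rw [← intervalIntegral.integral_add_adjacent_intervals (hint 0 a le_rfl ha)
    (hint a (a + d) ha (by linarith))]
  have ha' : 0 < 1 + η a := by linarith [hη_nonneg a ha]
  gcongr
  calc ∫ s in a..(a + d), 1 / (1 + η s) ≤ ∫ _ in a..(a + d), 1 / (1 + η a) :=
        intervalIntegral.integral_mono_on (by linarith) (hint a (a + d) ha (by linarith))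
          intervalIntegrable_const fun s hs =>
            one_div_le_one_div_of_le ha' (by linarith [hη_mono ha (ha.trans hs.1) hs.1])
    _ = d / (1 + η a) := by simp [div_eq_mul_inv]

theorem pos_of_zero_lt_intervalIntegral {g : ℝ → ℝ} {R : ℝ} (hR : 0 ≤ R)
    (h : 0 < ∫ s in (0:ℝ)..R, g s) : 0 < R :=
  hR.lt_of_ne <| by rintro rfl; simp at h

end Integral

section Ekeland

variable {X : Type*} [PseudoMetricSpace X]

theorem exists_mem_forall_le_add {α : Type*} {f : α → ℝ} {s : Set α} (hs : s.Nonempty)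
    (hf : BddBelow (f '' s)) {ε : ℝ} (hε : 0 < ε) : ∃ z ∈ s, ∀ x ∈ s, f z ≤ f x + ε := by
  obtain ⟨_, ⟨z, hz, rfl⟩, hlt⟩ :=
    exists_lt_of_csInf_lt (hs.image f) (lt_add_of_pos_right (sInf (f '' s)) hε)
  exact ⟨z, hz, fun x hx => hlt.le.trans (by gcongr; exact csInf_le hf (mem_image_of_mem f hx))⟩

theorem cauchySeq_of_mul_dist_le_sub {y : ℕ → X} {F : ℕ → ℝ} {c m : ℝ} (hc : 0 < c)
    (hm : ∀ n, m ≤ F n) (h : ∀ n, c * dist (y n) (y (n + 1)) ≤ F n - F (n + 1)) :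
    CauchySeq y := by
  have hdist : ∀ n, dist (y n) (y (n + 1)) ≤ (F n - F (n + 1)) / c := fun n => by
    rw [le_div_iff₀' hc]; exact h n
  refine cauchySeq_of_dist_le_of_summable _ hdist (summable_of_sum_range_le (c := (F 0 - m) / c)
    (fun n => dist_nonneg.trans (hdist n)) fun n => ?_)
  rw [← Finset.sum_div, Finset.sum_range_sub']
  gcongr
  linarith [hm n]

theorem exists_ekeland_seq {f : X → ℝ} (hbdd : BddBelow (range f)) (c : X → ℝ) (w : X) :
    ∃ y : ℕ → X, y 0 = w ∧ ∀ n, f (y (n + 1)) + c (y n) * dist (y (n + 1)) (y n) ≤ f (y n) ∧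
      ∀ x, f x + c (y n) * dist x (y n) ≤ f (y n) → f (y (n + 1)) ≤ f x + 1 / (n + 1) := by
  obtain ⟨m, hm⟩ := hbdd
  have hnext : ∀ (n : ℕ) (z : X), ∃ z', f z' + c z * dist z' z ≤ f z ∧
      ∀ x, f x + c z * dist x z ≤ f z → f z' ≤ f x + 1 / (n + 1) := fun n z =>
    exists_mem_forall_le_add (s := {x | f x + c z * dist x z ≤ f z}) ⟨z, by simp⟩
      ⟨m, fun _ ⟨x, _, hx⟩ => hx ▸ hm (mem_range_self x)⟩ Nat.one_div_pos_of_nat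
  choose next hnext_step hnext_min using hnext
  exact ⟨fun n => Nat.rec w (fun k z => next k z) n, rfl,
    fun n => ⟨hnext_step n _, hnext_min n _⟩⟩

/-- Ekeland's variational principle with a variable weight `c`. -/
theorem exists_forall_le_add_mul_dist [CompleteSpace X] {f : X → ℝ}
    (hf : LowerSemicontinuous f) (hbdd : BddBelow (range f)) {c : X → ℝ} (hc : Continuous c)
    {A : Set X} {c₀ : ℝ} (hc₀ : 0 < c₀) (hcA : ∀ z ∈ A, c₀ ≤ c z)
    (hA : ∀ z ∈ A, ∀ x, f x + c z * dist x z ≤ f z → x ∈ A) {w : X} (hw : w ∈ A) :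
    ∃ v ∈ closure A, f v ≤ f w ∧ ∀ x, f v ≤ f x + c v * dist x v := by
  obtain ⟨y, rfl, hy⟩ := exists_ekeland_seq hbdd c w
  have hyA : ∀ n, y n ∈ A := by
    intro n
    induction n with
    | zero => exact hw
    | succ n ih => exact hA _ ih _ (hy n).1
  have hstep : ∀ n, c₀ * dist (y n) (y (n + 1)) ≤ f (y n) - f (y (n + 1)) := fun n => by
    have := mul_le_mul_of_nonneg_right (hcA _ (hyA n)) (dist_nonneg (x := y n) (y := y (n + 1)))
    linarith [dist_comm (y n) (y (n + 1)) ▸ (hy n).1]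
  have hanti : Antitone (f ∘ y) := antitone_nat_of_succ_le fun n => by
    change f (y (n + 1)) ≤ f (y n)
    linarith [hstep n, mul_nonneg hc₀.le (dist_nonneg (x := y n) (y := y (n + 1)))]
  obtain ⟨m, hm⟩ := hbdd
  obtain ⟨v, hv⟩ := cauchySeq_tendsto_of_complete
    (cauchySeq_of_mul_dist_le_sub hc₀ (fun n => hm (mem_range_self (y n))) hstep)
  have hfv : ∀ n, f v ≤ f (y n) := fun n =>
    (hf.isClosed_preimage (f (y n))).mem_of_tendsto hv (eventually_atTop.2 ⟨n, fun k hk => hanti hk⟩)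
  refine ⟨v, mem_closure_of_tendsto hv (Eventually.of_forall hyA), hfv 0, fun x => ?_⟩
  by_contra! hx
  have hcv : c₀ ≤ c v := closure_minimal hcA (isClosed_le continuous_const hc)
    (mem_closure_of_tendsto hv (Eventually.of_forall hyA))
  have hlim : Tendsto (fun n => f x + c (y n) * dist x (y n)) atTop
      (𝓝 (f x + c v * dist x v)) :=
    tendsto_const_nhds.add (((hc.tendsto v).comp hv).mul (tendsto_const_nhds.dist hv))
  -- Eventually `x` is an admissible step from `y n`, so `y (n + 1)` nearly undercuts it.
  have hfvx : f v ≤ f x := by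
    have hε : Tendsto (fun n : ℕ => f x + 1 / ((n : ℝ) + 1)) atTop (𝓝 (f x)) := by
      simpa using tendsto_const_nhds.add (tendsto_one_div_add_atTop_nhds_zero_nat (𝕜 := ℝ))
    refine ge_of_tendsto hε ?_
    filter_upwards [hlim.eventually (gt_mem_nhds hx)] with n hn
    exact (hfv (n + 1)).trans ((hy n).2 x (hn.le.trans (hfv n)))
  nlinarith [dist_nonneg (x := x) (y := v)]

end Ekeland

section Zhong

variable {X : Type*} [PseudoMetricSpace X] [CompleteSpace X] {η : ℝ → ℝ}

theorem exists_zhong_point {f : X → ℝ} (hf : LowerSemicontinuous f) {m : ℝ} (hm : ∀ x, m ≤ f x)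
    (hη_nonneg : ∀ s, 0 ≤ s → 0 ≤ η s) (hη_mono : MonotoneOn η (Ici 0))
    (hη_cont : ContinuousOn η (Ici 0)) {ρ R : ℝ} (hρ : 0 < ρ) (hR : 0 ≤ R)
    (hint : ρ ≤ ∫ s in (0:ℝ)..R, 1 / (1 + η s)) {w : X} (hw : f w < m + ρ ^ 2) :
    ∃ v, dist v w ≤ R ∧ f v ≤ f w ∧ ∀ x, f v ≤ f x + ρ / (1 + η (dist v w)) * dist x v := by
  set Φ : ℝ → ℝ := fun t => ∫ s in (0:ℝ)..t, 1 / (1 + η s)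
  have hpos : ∀ t, 0 ≤ t → 0 < 1 + η t := fun t ht => by linarith [hη_nonneg t ht]
  -- Zhong's potential `ρ Φ(d(·, w))` is what keeps the Ekeland sequence within distance `R`.
  set A : Set X := {z | ρ * Φ (dist z w) + f z ≤ f w}
  have hA_dist : ∀ z ∈ A, dist z w ≤ R := fun z hz => by
    by_contra! h
    have hΦ := integral_one_div_one_add_mono hη_nonneg hη_cont hR h.le
    have := mul_le_mul_of_nonneg_left (hint.trans hΦ) hρ.le
    change ρ * Φ (dist z w) + f z ≤ f w at hz
    nlinarith [hm z]
  have hA : ∀ z ∈ A, ∀ x, f x + ρ / (1 + η (dist z w)) * dist x z ≤ f z → x ∈ A := by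
    intro z hz x hx
    have hΦ : Φ (dist x w) ≤ Φ (dist z w) + dist x z / (1 + η (dist z w)) :=
      (integral_one_div_one_add_mono hη_nonneg hη_cont dist_nonneg
        ((dist_triangle x z w).trans_eq (add_comm _ _))).trans
        (integral_one_div_one_add_add_le hη_nonneg hη_mono hη_cont dist_nonneg dist_nonneg)
    have := mul_le_mul_of_nonneg_left hΦ hρ.le
    rw [mul_add, mul_div_assoc', ← div_mul_eq_mul_div] at this
    change ρ * Φ (dist z w) + f z ≤ f w at hz
    change ρ * Φ (dist x w) + f x ≤ f w
    linarith
  have hc : Continuous fun z => ρ / (1 + η (dist z w)) :=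
    continuous_const.div (continuous_const.add
      (hη_cont.comp_continuous (continuous_id.dist continuous_const) fun _ => dist_nonneg))
      fun z => (hpos _ dist_nonneg).ne'
  obtain ⟨v, hvA, hvw, hv⟩ := exists_forall_le_add_mul_dist hf ⟨m, by simpa [lowerBounds] using hm⟩
    hc (div_pos hρ (hpos R hR)) (fun z hz => div_le_div_of_nonneg_left hρ.le (hpos _ dist_nonneg)
      (by linarith [hη_mono dist_nonneg hR (hA_dist z hz)])) hA (w := w) (by simp [A, Φ])
  exact ⟨v, closure_minimal hA_dist (isClosed_le (continuous_id.dist continuous_const)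
    continuous_const) hvA, hvw, hv⟩

end Zhong

section WeakSlope

variable {X : Type*} [NormedAddCommGroup X] [NormedSpace ℝ X]

theorem weakSlope_nonneg (f : X → EReal) (v : X) : 0 ≤ weakSlope f v :=
  le_sSup ⟨0, le_rfl, by norm_cast, 1, one_pos, fun q => q.1.1,
    (continuous_fst.comp continuous_fst).continuousOn, fun _ _ _ ht => ⟨by simpa using ht.1, by simp⟩⟩

theorem weakSlope_le_of_forall_le_add {f : X → EReal} {v : X} (hv_top : f v ≠ ⊤)
    (hv_bot : f v ≠ ⊥) {c : ℝ} (hc : 0 ≤ c) (h : ∀ x, f v ≤ f x + ((c * ‖x - v‖ : ℝ) : EReal)) :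
    weakSlope f v ≤ c := by
  refine sSup_le ?_
  rintro _ ⟨s, -, rfl, δ, hδ, D, -, hD⟩
  set a := (f v).toReal
  have hfv : f v = a := (EReal.coe_toReal hv_top hv_bot).symm
  obtain ⟨hDv, hfD⟩ := hD (v, a) ⟨mem_ball_self hδ, hfv.le⟩ δ ⟨hδ.le, le_rfl⟩
  rw [hfv, ← EReal.coe_sub] at hfD
  have : (a : EReal) ≤ ((a - s * δ + c * δ : ℝ) : EReal) :=
    calc (a : EReal) ≤ f (D ((v, a), δ)) + ((c * ‖D ((v, a), δ) - v‖ : ℝ) : EReal) := hfv ▸ h _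
      _ ≤ ((a - s * δ : ℝ) : EReal) + ((c * δ : ℝ) : EReal) := by gcongr
      _ = ((a - s * δ + c * δ : ℝ) : EReal) := (EReal.coe_add _ _).symm
  have : s * δ ≤ c * δ := by linarith [EReal.coe_le_coe_iff.1 this]
  exact EReal.coe_le_coe_iff.2 (le_of_mul_le_mul_right this hδ)

end WeakSlope

theorem EReal.coe_toReal_min_coe {x : EReal} (hx : x ≠ ⊥) (b : ℝ) :
    ((min x b).toReal : EReal) = min x b :=
  EReal.coe_toReal (ne_top_of_le_ne_top (EReal.coe_ne_top b) (min_le_right _ _))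
    (lt_min hx.bot_lt (EReal.bot_lt_coe b)).ne'

theorem LowerSemicontinuous.toReal_min_coe {X : Type*} [TopologicalSpace X] {f : X → EReal}
    (hf : LowerSemicontinuous f) (hf_bot : ∀ x, f x ≠ ⊥) (b : ℝ) :
    LowerSemicontinuous fun x => (min (f x) b).toReal := by
  have hmin : LowerSemicontinuous fun x => min (f x) (b : EReal) := hf.inf lowerSemicontinuous_const
  intro x y hy
  have hxy : (y : EReal) < min (f x) b := by
    rw [← EReal.coe_toReal_min_coe (hf_bot x)]; exact_mod_cast hy
  filter_upwards [hmin x y hxy] with x' hx'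
  rw [← EReal.coe_toReal_min_coe (hf_bot x')] at hx'
  exact_mod_cast hx'

theorem exists_zhong_point_of_lt_iInf_add_sq {X : Type*} [PseudoMetricSpace X] [CompleteSpace X]
    {f : X → EReal} (hf : LowerSemicontinuous f) (hm_bot : (⨅ x, f x) ≠ ⊥) {η : ℝ → ℝ}
    (hη_nonneg : ∀ s, 0 ≤ s → 0 ≤ η s) (hη_mono : MonotoneOn η (Ici 0))
    (hη_cont : ContinuousOn η (Ici 0)) {ρ R : ℝ} (hρ : 0 < ρ) (hR : 0 ≤ R)
    (hint : ρ ≤ ∫ s in (0:ℝ)..R, 1 / (1 + η s)) {w : X}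
    (hw : f w < (⨅ x, f x) + ((ρ ^ 2 : ℝ) : EReal)) :
    ∃ v, dist v w ≤ R ∧ f v ≤ f w ∧
      ∀ x, f v ≤ f x + ((ρ / (1 + η (dist v w)) * dist x v : ℝ) : EReal) := by
  have hf_bot : ∀ x, f x ≠ ⊥ := fun x => ne_bot_of_le_ne_bot hm_bot (iInf_le f x)
  have hm_top : (⨅ x, f x) ≠ ⊤ := ne_top_of_le_ne_top hw.ne_top (iInf_le f w)
  set m := (⨅ x, f x).toReal
  set a := (f w).toReal
  have hfw : f w = a := (EReal.coe_toReal hw.ne_top (hf_bot w)).symm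
  have hm : (⨅ x, f x) = m := (EReal.coe_toReal hm_top hm_bot).symm
  have hma : m ≤ a := by exact_mod_cast hm ▸ hfw ▸ iInf_le f w
  -- Truncated at level `f w + 1`, `f` becomes real-valued without changing its values below `f w`.
  set g : X → ℝ := fun x => (min (f x) ((a + 1 : ℝ) : EReal)).toReal
  have hg : ∀ x, (g x : EReal) = min (f x) ((a + 1 : ℝ) : EReal) := fun x =>
    EReal.coe_toReal_min_coe (hf_bot x) _
  have hgw : g w = a := by
    rw [← EReal.coe_eq_coe_iff, hg, hfw, min_eq_left (EReal.coe_le_coe_iff.2 (by linarith))]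
  have hgm : ∀ x, m ≤ g x := fun x => by
    rw [← EReal.coe_le_coe_iff, hg]
    exact le_min (hm ▸ iInf_le f x) (EReal.coe_le_coe_iff.2 (by linarith))
  have hgw_lt : g w < m + ρ ^ 2 := by
    rw [hgw, ← EReal.coe_lt_coe_iff, EReal.coe_add, ← hfw, ← hm]; exact hw
  obtain ⟨v, hvw, hgv, hv⟩ := exists_zhong_point (hf.toReal_min_coe hf_bot (a + 1)) hgm hη_nonneg
    hη_mono hη_cont hρ hR hint hgw_lt
  have hfv : f v = g v := by
    have hlt : min (f v) ((a + 1 : ℝ) : EReal) < ((a + 1 : ℝ) : EReal) := by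
      rw [← hg]; exact EReal.coe_lt_coe_iff.2 (by linarith)
    rw [hg, min_eq_left ((min_lt_iff.1 hlt).resolve_right (lt_irrefl _)).le]
  refine ⟨v, hvw, by rw [hfv, hfw]; exact EReal.coe_le_coe_iff.2 (hgw ▸ hgv), fun x => ?_⟩
  calc f v ≤ ((g x + ρ / (1 + η (dist v w)) * dist x v : ℝ) : EReal) :=
        hfv ▸ EReal.coe_le_coe_iff.2 (hv x)
    _ = g x + ((ρ / (1 + η (dist v w)) * dist x v : ℝ) : EReal) := EReal.coe_add _ _
    _ ≤ f x + ((ρ / (1 + η (dist v w)) * dist x v : ℝ) : EReal) := by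
        gcongr; rw [hg]; exact min_le_left _ _

theorem exists_norm_sub_le_mul_weakSlope_le {X : Type*} [NormedAddCommGroup X] [NormedSpace ℝ X]
    [CompleteSpace X] {f : X → EReal} (hf : LowerSemicontinuous f) (hm_bot : (⨅ x, f x) ≠ ⊥)
    {η : ℝ → ℝ} (hη_nonneg : ∀ s, 0 ≤ s → 0 ≤ η s) (hη_mono : MonotoneOn η (Ici 0))
    (hη_cont : ContinuousOn η (Ici 0)) {ρ R : ℝ} (hρ : 0 < ρ) (hR : 0 ≤ R)
    (hint : ρ ≤ ∫ s in (0:ℝ)..R, 1 / (1 + η s)) {w : X}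
    (hw : f w < (⨅ x, f x) + ((ρ ^ 2 : ℝ) : EReal)) :
    ∃ v, ‖v - w‖ ≤ R ∧ f v ≤ f w ∧ ((1 + η ‖v - w‖ : ℝ) : EReal) * weakSlope f v ≤ ρ := by
  obtain ⟨v, hvw, hfv, hv⟩ := exists_zhong_point_of_lt_iInf_add_sq hf hm_bot hη_nonneg hη_mono
    hη_cont hρ hR hint hw
  simp only [dist_eq_norm] at hvw hv
  have hcoef : 0 < 1 + η ‖v - w‖ := by linarith [hη_nonneg _ (norm_nonneg (v - w))]
  have hslope : weakSlope f v ≤ ((ρ / (1 + η ‖v - w‖) : ℝ) : EReal) :=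
    weakSlope_le_of_forall_le_add (hfv.trans_lt hw).ne_top
      (ne_bot_of_le_ne_bot hm_bot (iInf_le f v)) (div_pos hρ hcoef).le hv
  refine ⟨v, hvw, hfv, ?_⟩
  calc ((1 + η ‖v - w‖ : ℝ) : EReal) * weakSlope f v
      ≤ ((1 + η ‖v - w‖ : ℝ) : EReal) * ((ρ / (1 + η ‖v - w‖) : ℝ) : EReal) :=
        mul_le_mul_of_nonneg_left hslope (EReal.coe_nonneg.2 hcoef.le)
    _ = ρ := by rw [← EReal.coe_mul, mul_div_cancel₀ _ hcoef.ne']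

section Polarization

variable {α β : Type*} {pol : α → β → α} {S : Set α}

theorem foldl_le {γ : Type*} [Preorder γ] {f : α → γ} (hS : ∀ u ∈ S, ∀ H, pol u H ∈ S)
    (hf : ∀ u ∈ S, ∀ H, f (pol u H) ≤ f u) (l : List β) {u : α} (hu : u ∈ S) :
    f (l.foldl pol u) ≤ f u := by
  induction l generalizing u with
  | nil => exact le_rfl
  | cons H l ih => exact (ih (hS u hu H)).trans (hf u hu H)

variable {V : Type*} [SeminormedAddCommGroup V] {ι : α → V}

theorem norm_sub_foldl_le (hS : ∀ u ∈ S, ∀ H, pol u H ∈ S)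
    (hpol : ∀ u ∈ S, ∀ v ∈ S, ∀ H, ‖ι (pol u H) - ι (pol v H)‖ ≤ ‖ι u - ι v‖) (l : List β)
    {u v : α} (hu : u ∈ S) (hv : v ∈ S) :
    ‖ι (l.foldl pol u) - ι (l.foldl pol v)‖ ≤ ‖ι u - ι v‖ := by
  induction l generalizing u v with
  | nil => exact le_rfl
  | cons H l ih => exact (ih (hS u hu H) (hS v hv H)).trans (hpol u hu v hv H)

theorem norm_sub_le_of_tendsto_foldl (hS : ∀ u ∈ S, ∀ H, pol u H ∈ S)
    (hpol : ∀ u ∈ S, ∀ v ∈ S, ∀ H, ‖ι (pol u H) - ι (pol v H)‖ ≤ ‖ι u - ι v‖)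
    {ls : ℕ → List β} {u v : α} {a b : V}
    (hua : Tendsto (fun n => ι ((ls n).foldl pol u)) atTop (𝓝 a))
    (hvb : Tendsto (fun n => ι ((ls n).foldl pol v)) atTop (𝓝 b)) (hu : u ∈ S) (hv : v ∈ S) :
    ‖a - b‖ ≤ ‖ι u - ι v‖ :=
  le_of_tendsto (hua.sub hvb).norm
    (Eventually.of_forall fun n => norm_sub_foldl_le hS hpol (ls n) hu hv)

end Polarization

theorem norm_sub_sy_le {X V : Type*} [SeminormedAddCommGroup V] {ι : X → V} {S : Set X}
    {sy Θ : X → X} {CΘ : ℝ} (hsy : ∀ a ∈ S, ∀ b ∈ S, ‖ι (sy a) - ι (sy b)‖ ≤ ‖ι a - ι b‖)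
    (hΘS : ∀ u, Θ u ∈ S) (hΘid : ∀ u ∈ S, Θ u = u)
    (hΘlip : ∀ u v, ‖ι (Θ u) - ι (Θ v)‖ ≤ CΘ * ‖ι u - ι v‖) (hsyΘ : ∀ u, sy u = sy (Θ u))
    (v : X) {w : X} (hw : w ∈ S) :
    ‖ι v - ι (sy v)‖ ≤ (CΘ + 1) * ‖ι v - ι w‖ + ‖ι w - ι (sy w)‖ := by
  have hsyvw : ‖ι (sy w) - ι (sy v)‖ ≤ CΘ * ‖ι v - ι w‖ := by
    rw [hsyΘ v, norm_sub_rev]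
    calc ‖ι (sy (Θ v)) - ι (sy w)‖ ≤ ‖ι (Θ v) - ι w‖ := hsy _ (hΘS v) w hw
      _ = ‖ι (Θ v) - ι (Θ w)‖ := by rw [hΘid w hw]
      _ ≤ CΘ * ‖ι v - ι w‖ := hΘlip v w
  linarith [norm_sub_le_norm_sub_add_norm_sub (ι v) (ι w) (ι (sy v)),
    norm_sub_le_norm_sub_add_norm_sub (ι w) (ι (sy w)) (ι (sy v))]

theorem exists_near_symmetric_mul_weakSlope_le {X : Type*} [NormedAddCommGroup X]
    [NormedSpace ℝ X] [CompleteSpace X] {V : Type*} [SeminormedAddCommGroup V] {ι : X → V}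
    {K : ℝ} (hK : 0 ≤ K) (hι : ∀ u v, ‖ι u - ι v‖ ≤ K * ‖u - v‖) {S : Set X} {sy Θ : X → X}
    {CΘ : ℝ} (hCΘ : 0 ≤ CΘ) (hsy : ∀ a ∈ S, ∀ b ∈ S, ‖ι (sy a) - ι (sy b)‖ ≤ ‖ι a - ι b‖)
    (hΘS : ∀ u, Θ u ∈ S) (hΘid : ∀ u ∈ S, Θ u = u)
    (hΘlip : ∀ u v, ‖ι (Θ u) - ι (Θ v)‖ ≤ CΘ * ‖ι u - ι v‖) (hsyΘ : ∀ u, sy u = sy (Θ u))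
    {f : X → EReal} (hf : LowerSemicontinuous f) (hm_bot : (⨅ x, f x) ≠ ⊥)
    {η : ℝ → ℝ} (hη_nonneg : ∀ s, 0 ≤ s → 0 ≤ η s) (hη_mono : MonotoneOn η (Ici 0))
    (hη_cont : ContinuousOn η (Ici 0)) {ρ R : ℝ} (hρ : 0 < ρ) (hR : 0 ≤ R)
    (hint : ρ ≤ ∫ s in (0:ℝ)..R, 1 / (1 + η s)) {w : X} (hwS : w ∈ S)
    (hw_sy : ‖ι w - ι (sy w)‖ < R) (hw : f w < (⨅ x, f x) + ((ρ ^ 2 : ℝ) : EReal)) :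
    ∃ v, f v ≤ f w ∧ ‖ι v - ι (sy v)‖ < (K * (CΘ + 1) + 1) * R ∧
      ((1 + η ‖v - w‖ : ℝ) : EReal) * weakSlope f v ≤ ρ := by
  obtain ⟨v, hvw, hfv, hslope⟩ := exists_norm_sub_le_mul_weakSlope_le hf hm_bot hη_nonneg hη_mono
    hη_cont hρ hR hint hw
  refine ⟨v, hfv, ?_, hslope⟩
  calc ‖ι v - ι (sy v)‖ ≤ (CΘ + 1) * ‖ι v - ι w‖ + ‖ι w - ι (sy w)‖ :=
        norm_sub_sy_le hsy hΘS hΘid hΘlip hsyΘ v hwS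
    _ < (CΘ + 1) * (K * R) + R := add_lt_add_of_le_of_lt (mul_le_mul_of_nonneg_left
          ((hι v w).trans (mul_le_mul_of_nonneg_left hvw hK)) (by linarith)) hw_sy
    _ = (K * (CΘ + 1) + 1) * R := by ring

theorem exists_tendsto_nhdsGT_eventually_lt_add_sq {x : ℕ → EReal} {m : EReal} (hm_top : m ≠ ⊤)
    (hm_bot : m ≠ ⊥) (hx : Tendsto x atTop (𝓝 m)) :
    ∃ ρ : ℕ → ℝ, Tendsto ρ atTop (𝓝[>] 0) ∧ ∀ᶠ j in atTop, x j < m + ((ρ j ^ 2 : ℝ) : EReal) := by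
  lift m to ℝ using ⟨hm_top, hm_bot⟩
  set e : ℕ → ℝ := fun j => |(x j).toReal - m| + 1 / (j + 1)
  have he : Tendsto e atTop (𝓝 0) := by
    have h := (((EReal.tendsto_toReal hm_top hm_bot).comp hx).sub_const m).abs.add
      (tendsto_one_div_add_atTop_nhds_zero_nat (𝕜 := ℝ))
    rwa [EReal.toReal_coe, sub_self, abs_zero, zero_add] at h
  have he_pos : ∀ j, 0 < e j := fun j => by positivity
  have hsqrt : Tendsto (fun j => √(e j)) atTop (𝓝 0) := by
    have h := (Real.continuous_sqrt.tendsto 0).comp he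
    rwa [Real.sqrt_zero] at h
  refine ⟨fun j => √(e j), tendsto_nhdsWithin_iff.2
    ⟨hsqrt, Eventually.of_forall fun j => Real.sqrt_pos.2 (he_pos j)⟩, ?_⟩
  filter_upwards [hx.eventually (Ioo_mem_nhds (EReal.coe_lt_coe_iff.2 (sub_one_lt m))
    (EReal.coe_lt_coe_iff.2 (lt_add_one m)))] with j hj
  have hxj : x j = (x j).toReal :=
    (EReal.coe_toReal (ne_top_of_lt hj.2) (ne_bot_of_gt hj.1)).symm
  rw [hxj, ← EReal.coe_add, EReal.coe_lt_coe_iff, Real.sq_sqrt (he_pos j).le]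
  linarith [le_abs_self ((x j).toReal - m), he_pos j, (Nat.one_div_pos_of_nat (α := ℝ) (n := j))]

theorem exists_seq_tendsto_of_forall_lt_iInf_add_sq {X : Type*} {f : X → EReal}
    (hm_top : (⨅ x, f x) ≠ ⊤) (hm_bot : (⨅ x, f x) ≠ ⊥) {ρ₀ : ℝ} (hρ₀ : 0 < ρ₀) {r : ℝ → ℝ}
    (hr : Tendsto r (𝓝[>] 0) (𝓝 0)) {C : ℝ} {u : ℕ → X}
    (hu : Tendsto (fun j => f (u j)) atTop (𝓝 (⨅ x, f x))) {d : X → ℝ} (hd : ∀ v, 0 ≤ d v)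
    {s : ℕ → X → EReal} (hs : ∀ j v, 0 ≤ s j v)
    (h : ∀ ρ ∈ Ioo 0 ρ₀, ∀ j, f (u j) < (⨅ x, f x) + ((ρ ^ 2 : ℝ) : EReal) →
      ∃ v, f v ≤ f (u j) ∧ d v < C * r ρ ∧ s j v ≤ ρ) :
    ∃ v : ℕ → X, Tendsto (fun j => f (v j)) atTop (𝓝 (⨅ x, f x)) ∧
      Tendsto (fun j => d (v j)) atTop (𝓝 0) ∧ Tendsto (fun j => s j (v j)) atTop (𝓝 0) := by
  obtain ⟨ρ, hρ, hlt⟩ := exists_tendsto_nhdsGT_eventually_lt_add_sq hm_top hm_bot hu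
  have hex : ∀ᶠ j in atTop, ∃ v, f v ≤ f (u j) ∧ d v < C * r (ρ j) ∧ s j v ≤ ρ j := by
    filter_upwards [hlt, hρ (Ioo_mem_nhdsGT hρ₀)] with j hj hρj using h _ hρj j hj
  obtain ⟨v, hv⟩ := hex.choice
  refine ⟨v, ?_, ?_, ?_⟩
  · exact tendsto_of_tendsto_of_tendsto_of_le_of_le' tendsto_const_nhds hu
      (Eventually.of_forall fun j => iInf_le f (v j)) (hv.mono fun j h => h.1)
  · refine squeeze_zero' (Eventually.of_forall fun j => hd _) (hv.mono fun j h => h.2.1.le) ?_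
    simpa using (hr.comp hρ).const_mul C
  · exact tendsto_of_tendsto_of_tendsto_of_le_of_le' tendsto_const_nhds
      (EReal.tendsto_coe.2 (tendsto_nhdsWithin_iff.1 hρ).1) (Eventually.of_forall fun j => hs _ _)
      (hv.mono fun j h => h.2.2)

theorem weak_slope_consequence_of_symmetric_zhong_general
    {X : Type*} [NormedAddCommGroup X] [NormedSpace ℝ X] [CompleteSpace X]
    {V : Type*} [NormedAddCommGroup V] [NormedSpace ℝ V]
    (ι : X →L[ℝ] V)
    (K : ℝ) (hK : 0 < K) (hιK : ∀ u : X, ‖ι u‖ ≤ K * ‖u‖)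
    (S : Set X)
    {P : Type*}
    (pol : X → P → X) (sy : X → X)
    (hpolS : ∀ u ∈ S, ∀ H : P, pol u H ∈ S)
    (happrox : ∃ Hs : ℕ → P, ∀ u ∈ S,
      Filter.Tendsto (fun m => ι (List.foldl pol u ((List.range m).map Hs)))
        Filter.atTop (nhds (ι (sy u))))
    (hpolContr : ∀ u ∈ S, ∀ v ∈ S, ∀ H : P, ‖ι (pol u H) - ι (pol v H)‖ ≤ ‖ι u - ι v‖)
    (Θ : X → X) (CΘ : ℝ) (hCΘ : 0 < CΘ)
    (hΘS : ∀ u : X, Θ u ∈ S) (hΘid : ∀ u ∈ S, Θ u = u)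
    (hΘlip : ∀ u v : X, ‖ι (Θ u) - ι (Θ v)‖ ≤ CΘ * ‖ι u - ι v‖)
    (hsyext : ∀ u : X, sy u = sy (Θ u))
    (T : ℝ → X → X)
    (hTS : ∀ ρ > (0:ℝ), ∀ u ∈ S, T ρ u ∈ S)
    (hTpol : ∀ ρ > (0:ℝ), ∀ u ∈ S, ∃ l : List P, T ρ u = List.foldl pol u l)
    (hTsy : ∀ ρ > (0:ℝ), ∀ u ∈ S, sy (T ρ u) = sy u)
    (hTapprox : ∀ ρ > (0:ℝ), ∀ u ∈ S, ‖ι (T ρ u) - ι (sy u)‖ < ρ)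
    (η : ℝ → ℝ) (hηnonneg : ∀ s : ℝ, 0 ≤ s → 0 ≤ η s)
    (hηmono : MonotoneOn η (Set.Ici 0)) (hηcont : ContinuousOn η (Set.Ici 0))
    (ρ₀ : ℝ) (hρ₀ : 0 < ρ₀) (r : ℝ → ℝ) (hrnonneg : ∀ ρ ∈ Set.Ico (0:ℝ) ρ₀, 0 ≤ r ρ)
    (hrint : ∀ ρ ∈ Set.Ioo (0:ℝ) ρ₀, ρ ≤ ∫ s in (0:ℝ)..(r ρ), 1 / (1 + η s))
    (hrlim : Filter.Tendsto r (nhdsWithin 0 (Set.Ioi 0)) (nhds 0))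
    (f : X → EReal)
    (hfproper : ∃ u, f u ≠ ⊤)
    (hfbdd : ∃ c : ℝ, ∀ u, (c : EReal) ≤ f u)
    (hflsc : LowerSemicontinuous f)
    (hfpol : ∀ u ∈ S, ∀ H : P, f (pol u H) ≤ f u)
 :
    (∀ ρ ∈ Set.Ioo (0:ℝ) ρ₀, ∀ u ∈ S,
      f u < (⨅ w, f w) + ((ρ ^ 2 : ℝ) : EReal) →
      ∃ v : X,
        ‖ι v - ι (sy v)‖ < (K * (CΘ + 1) + 1) * r ρ ∧
        ((1 + η ‖v - T (r ρ) u‖ : ℝ) : EReal) * weakSlope f v ≤ (ρ : EReal)) ∧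
    (∀ us : ℕ → X, (∀ j, us j ∈ S ∧ ∀ H : P, pol (us j) H = us j) →
      Filter.Tendsto (fun j => f (us j)) Filter.atTop (nhds (⨅ w, f w)) →
      ∃ vs : ℕ → X,
        Filter.Tendsto (fun j => f (vs j)) Filter.atTop (nhds (⨅ w, f w)) ∧
        Filter.Tendsto (fun j => ‖ι (vs j) - ι (sy (vs j))‖) Filter.atTop (nhds 0) ∧
        Filter.Tendsto (fun j => ((1 + η ‖vs j - us j‖ : ℝ) : EReal) * weakSlope f (vs j))
          Filter.atTop (nhds (0 : EReal))) := by
  obtain ⟨Hs, hHs⟩ := happrox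
  obtain ⟨c, hc⟩ := hfbdd
  have hm_bot : (⨅ w, f w) ≠ ⊥ := ne_bot_of_le_ne_bot (EReal.coe_ne_bot c) (le_iInf hc)
  have hsy : ∀ a ∈ S, ∀ b ∈ S, ‖ι (sy a) - ι (sy b)‖ ≤ ‖ι a - ι b‖ := fun a ha b hb =>
    norm_sub_le_of_tendsto_foldl hpolS hpolContr (hHs a ha) (hHs b hb) ha hb
  have hι : ∀ u v, ‖ι u - ι v‖ ≤ K * ‖u - v‖ := fun u v => map_sub ι u v ▸ hιK (u - v)
  have hr : ∀ ρ ∈ Ioo 0 ρ₀, 0 < r ρ := fun ρ hρ =>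
    pos_of_zero_lt_intervalIntegral (hrnonneg ρ ⟨hρ.1.le, hρ.2⟩) (hρ.1.trans_le (hrint ρ hρ))
  have key : ∀ ρ ∈ Ioo (0:ℝ) ρ₀, ∀ u ∈ S, f u < (⨅ w, f w) + ((ρ ^ 2 : ℝ) : EReal) →
      ∃ v, f v ≤ f u ∧ ‖ι v - ι (sy v)‖ < (K * (CΘ + 1) + 1) * r ρ ∧
        ((1 + η ‖v - T (r ρ) u‖ : ℝ) : EReal) * weakSlope f v ≤ ρ := by
    intro ρ hρ u hu hfu
    obtain ⟨l, hl⟩ := hTpol _ (hr ρ hρ) u hu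
    have hfT : f (T (r ρ) u) ≤ f u := hl ▸ foldl_le hpolS hfpol l hu
    have hT_sy : ‖ι (T (r ρ) u) - ι (sy (T (r ρ) u))‖ < r ρ :=
      hTsy _ (hr ρ hρ) u hu ▸ hTapprox _ (hr ρ hρ) u hu
    obtain ⟨v, hfv, hv⟩ := exists_near_symmetric_mul_weakSlope_le hK.le hι hCΘ.le hsy hΘS hΘid
      hΘlip hsyext hflsc hm_bot hηnonneg hηmono hηcont hρ.1 (hr ρ hρ).le (hrint ρ hρ)
      (hTS _ (hr ρ hρ) u hu) hT_sy (hfT.trans_lt hfu)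
    exact ⟨v, hfv.trans hfT, hv⟩
  refine ⟨fun ρ hρ u hu hfu => (key ρ hρ u hu hfu).imp fun _ h => h.2, fun us hus hmin => ?_⟩
  have hm_top : (⨅ w, f w) ≠ ⊤ :=
    let ⟨u, hu⟩ := hfproper; ne_top_of_le_ne_top hu (iInf_le f u)
  refine exists_seq_tendsto_of_forall_lt_iInf_add_sq hm_top hm_bot hρ₀ hrlim hmin
    (C := K * (CΘ + 1) + 1) (d := fun v => ‖ι v - ι (sy v)‖) (fun _ => norm_nonneg _)
    (s := fun j v => ((1 + η ‖v - us j‖ : ℝ) : EReal) * weakSlope f v)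
    (fun j v => mul_nonneg (EReal.coe_nonneg.2 (by linarith [hηnonneg _ (norm_nonneg (v - us j))]))
      (weakSlope_nonneg f v)) fun ρ hρ j hj => ?_
  obtain ⟨l, hl⟩ := hTpol _ (hr ρ hρ) _ (hus j).1
  simpa only [hl, List.foldl_fixed' (hus j).2] using key ρ hρ _ (hus j).1 hj

theorem weak_slope_consequence_of_symmetric_zhong
    {X : Type*} [NormedAddCommGroup X] [NormedSpace ℝ X] [CompleteSpace X]
    {V : Type*} [NormedAddCommGroup V] [NormedSpace ℝ V] [CompleteSpace V]
    {W : Type*} [NormedAddCommGroup W] [NormedSpace ℝ W] [CompleteSpace W]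
    (ι : X →L[ℝ] V) (κ : V →L[ℝ] W)
    (K : ℝ) (hK : 0 < K) (hιK : ∀ u : X, ‖ι u‖ ≤ K * ‖u‖)
    (S : Set X)
    {P : Type*} [TopologicalSpace P] [PathConnectedSpace P]
    (pol : X → P → X) (sy : X → X)
    (hpolS : ∀ u ∈ S, ∀ H : P, pol u H ∈ S)
    (hsyS : ∀ u : X, sy u ∈ S)
    (hpolCont : ContinuousOn (fun q : X × P => pol q.1 q.2) (S ×ˢ Set.univ))
    (hsypol : ∀ u ∈ S, ∀ H : P,
      pol (sy u) H = sy u ∧ sy (pol u H) = sy u ∧ pol (pol u H) H = pol u H)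
    (happrox : ∃ Hs : ℕ → P, ∀ u ∈ S,
      Filter.Tendsto (fun m => ι (List.foldl pol u ((List.range m).map Hs)))
        Filter.atTop (nhds (ι (sy u))))
    (hpolContr : ∀ u ∈ S, ∀ v ∈ S, ∀ H : P, ‖ι (pol u H) - ι (pol v H)‖ ≤ ‖ι u - ι v‖)
    (Θ : X → X) (CΘ : ℝ) (hCΘ : 0 < CΘ)
    (hΘS : ∀ u : X, Θ u ∈ S) (hΘid : ∀ u ∈ S, Θ u = u)
    (hΘlip : ∀ u v : X, ‖ι (Θ u) - ι (Θ v)‖ ≤ CΘ * ‖ι u - ι v‖)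
    (hpolext : ∀ u : X, ∀ H : P, pol u H = pol (Θ u) H)
    (hsyext : ∀ u : X, sy u = sy (Θ u))
    (T : ℝ → X → X)
    (hTS : ∀ ρ > (0:ℝ), ∀ u ∈ S, T ρ u ∈ S)
    (hTpol : ∀ ρ > (0:ℝ), ∀ u ∈ S, ∃ l : List P, T ρ u = List.foldl pol u l)
    (hTsy : ∀ ρ > (0:ℝ), ∀ u ∈ S, sy (T ρ u) = sy u)
    (hTapprox : ∀ ρ > (0:ℝ), ∀ u ∈ S, ‖ι (T ρ u) - ι (sy u)‖ < ρ)
    (η : ℝ → ℝ) (hηnonneg : ∀ s : ℝ, 0 ≤ s → 0 ≤ η s)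
    (hηmono : MonotoneOn η (Set.Ici 0)) (hηcont : ContinuousOn η (Set.Ici 0))
    (hηdiv : Filter.Tendsto (fun R : ℝ => ∫ s in (0:ℝ)..R, 1 / (1 + η s))
      Filter.atTop Filter.atTop)
    (ρ₀ : ℝ) (hρ₀ : 0 < ρ₀) (r : ℝ → ℝ) (hrnonneg : ∀ ρ ∈ Set.Ico (0:ℝ) ρ₀, 0 ≤ r ρ)
    (hrint : ∀ ρ ∈ Set.Ioo (0:ℝ) ρ₀, ρ ≤ ∫ s in (0:ℝ)..(r ρ), 1 / (1 + η s))
    (hrlim : Filter.Tendsto r (nhdsWithin 0 (Set.Ioi 0)) (nhds 0))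
    (f : X → EReal)
    (hfproper : ∃ u, f u ≠ ⊤)
    (hfbdd : ∃ c : ℝ, ∀ u, (c : EReal) ≤ f u)
    (hflsc : LowerSemicontinuous f)
    (hfpol : ∀ u ∈ S, ∀ H : P, f (pol u H) ≤ f u)
 :
    (∀ ρ ∈ Set.Ioo (0:ℝ) ρ₀, ∀ u ∈ S,
      f u < (⨅ w, f w) + ((ρ ^ 2 : ℝ) : EReal) →
      ∃ v : X,
        ‖ι v - ι (sy v)‖ < (K * (CΘ + 1) + 1) * r ρ ∧
        ((1 + η ‖v - T (r ρ) u‖ : ℝ) : EReal) * weakSlope f v ≤ (ρ : EReal)) ∧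
    (∀ us : ℕ → X, (∀ j, us j ∈ S ∧ ∀ H : P, pol (us j) H = us j) →
      Filter.Tendsto (fun j => f (us j)) Filter.atTop (nhds (⨅ w, f w)) →
      ∃ vs : ℕ → X,
        Filter.Tendsto (fun j => f (vs j)) Filter.atTop (nhds (⨅ w, f w)) ∧
        Filter.Tendsto (fun j => ‖ι (vs j) - ι (sy (vs j))‖) Filter.atTop (nhds 0) ∧
        Filter.Tendsto (fun j => ((1 + η ‖vs j - us j‖ : ℝ) : EReal) * weakSlope f (vs j))
          Filter.atTop (nhds (0 : EReal))) :=
  weak_slope_consequence_of_symmetric_zhong_general ι K hK hιK S pol sy hpolS happrox hpolContr Θ CΘ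
    hCΘ hΘS hΘid hΘlip hsyext T hTS hTpol hTsy hTapprox η hηnonneg hηmono hηcont ρ₀ hρ₀ r hrnonneg
    hrint hrlim f hfproper hfbdd hflsc hfpol
end
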